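/- Let (X, τ) be a topological space and let *O(X) denote the topology on X generated by the *-open sets. Then (X, τ) is connected if and only if (X, *O(X)) is connected. -/

import Mathlib

open Set TopologicalSpace

def RegOpen (X : Type*) [TopologicalSpace X] (U : Set X) : Prop :=
  interior (closure U) = U

def starInt (X : Type*) [TopologicalSpace X] (A : Set X) : Set X :=
  {x | x ∈ A ∧ ∃ W, RegOpen X W ∧ x ∈ W ∧ W ⊆ A}

def starCl (X : Type*) [TopologicalSpace X] (A : Set X) : Set X :=
  {x | ∀ W, RegOpen X W → x ∈ W → (W ∩ A).Nonempty}

def StarOpen (X : Type*) [TopologicalSpace X] (A : Set X) : Prop :=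
  ∀ x ∈ A, ∃ W, RegOpen X W ∧ x ∈ W ∧ W ⊆ A

def starTop (X : Type*) [TopologicalSpace X] : TopologicalSpace X :=
  TopologicalSpace.generateFrom {A | StarOpen X A}

def StarContinuous {X Y : Type*} [TopologicalSpace X] [TopologicalSpace Y] (f : X → Y) : Prop :=
  ∀ A : Set Y, StarOpen Y A → StarOpen X (f ⁻¹' A)

/-! A clopen set is regular open, hence *-open, while *-open sets are open; so `τ` and `*O(X)`
have the same clopen sets, and connectedness only depends on the clopen sets. -/

lemma StarOpen.isOpen {X : Type*} [TopologicalSpace X] {A : Set X} (h : StarOpen X A) :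
    IsOpen A := by
  rw [isOpen_iff_forall_mem_open]
  intro x hx
  obtain ⟨W, hW, hxW, hWA⟩ := h x hx
  exact ⟨W, hWA, hW ▸ isOpen_interior, hxW⟩

lemma le_starTop {X : Type*} [t : TopologicalSpace X] : t ≤ starTop X :=
  le_generateFrom fun _ h => h.isOpen

lemma IsClopen.starOpen {X : Type*} [TopologicalSpace X] {A : Set X} (h : IsClopen A) :
    StarOpen X A := fun x hx =>
  ⟨A, by rw [RegOpen, h.isClosed.closure_eq, h.isOpen.interior_eq], hx, subset_rfl⟩

lemma isClopen_starTop_iff {X : Type*} [TopologicalSpace X] {A : Set X} :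
    @IsClopen X (starTop X) A ↔ IsClopen A :=
  ⟨fun h => ⟨h.1.mono le_starTop, le_starTop _ h.2⟩, fun h =>
    ⟨(@isOpen_compl_iff X A (starTop X)).mp (isOpen_generateFrom_of_mem h.compl.starOpen),
      isOpen_generateFrom_of_mem h.starOpen⟩⟩

theorem stmt13 {X : Type*} [TopologicalSpace X] :
    ConnectedSpace X ↔ @ConnectedSpace X (starTop X) := by
  simp only [connectedSpace_iff_clopen, isClopen_starTop_iff]
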